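/- Let A be a finite-dimensional commutative local ℂ-algebra with maximal ideal m and residue field ℂ, regarded as a normed ℂ-algebra. Let a, b ∈ m (so a, b are nilpotent), let j, k be nonzero integers, let ε > 0, and let γ(t) = ε·e^{2πit}. Consider the iterated integral I := ∫_{0 ≤ t₁ ≤ t₂ ≤ 1} (−a·j·γ(t₁)^{j−1}γ'(t₁))(1 − aγ(t₁)^j)⁻¹ · (−b·k·γ(t₂)^{k−1}γ'(t₂))(1 − bγ(t₂)^k)⁻¹ dt₁ dt₂, i.e. the iterated integral of d(1 − a x^j)/(1 − a x^j) followed by d(1 − b x^k)/(1 − b x^k) along γ. If j·k > 0 then I = 0. If j·k < 0 then, with d := gcd(|j|,|k|), I = 2πi·sgn(j)·d·log(1 − a^{|k|/d} b^{|j|/d}). -/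

import Mathlib

open MeasureTheory

/-- The simplex `{0 ≤ t 1 ≤ ⋯ ≤ t k ≤ 1}` in `[0,1]^k`. -/
def orderedSimplex (k : ℕ) : Set (Fin k → ℝ) :=
  {t | (∀ i, t i ∈ Set.Icc (0 : ℝ) 1) ∧ ∀ i j : Fin k, i ≤ j → t i ≤ t j}

/-- The circle of radius `ε` around `0`, parametrized by `t ↦ ε e^{2πit}`. -/
noncomputable def circlePath (ε : ℝ) : ℝ → ℂ :=
  fun t => (ε : ℂ) * Complex.exp (2 * Real.pi * Complex.I * (t : ℂ))

/-- `log (1 - u) := -∑_{k ≥ 1} u^k / k`; for `u` nilpotent this is a finite sum. -/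
noncomputable def logOneSub {A : Type*} [NormedCommRing A] [NormedAlgebra ℂ A] (u : A) : A :=
  -∑' k : ℕ, ((k + 1 : ℂ)⁻¹) • u ^ (k + 1)

/-!
Since `a` and `b` are nilpotent, both forms are finite sums:
`d(1 - a x^j)/(1 - a x^j) = -∑_{m ≥ 1} j a^m x^{jm} dx/x`. Along `γ = circlePath ε`, `x^p dx/x`
becomes `2πi γ(t)^p dt`, and the iterated integral of `γ^p` followed by `γ^q` (`p, q ≠ 0`) is
`1/(2πi p)` when `p + q = 0` and `0` otherwise, because `∫₀¹ γ^r = 0` for `r ≠ 0`. Hence only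
the pairs `(m, n)` with `j m + k n = 0` contribute. There are none when `j k > 0`; when `j k < 0`
they are `(|k|/d · s, |j|/d · s)` for `s ≥ 1`, and their contributions `-2πi sgn(j) d u^s / s`,
with `u = a^{|k|/d} b^{|j|/d}`, add up to `2πi sgn(j) d log(1 - u)`.
-/

open Finset Complex Real

theorem sum_range_succ_eq_sum_Icc_one {M : Type*} [AddCommMonoid M] (f : ℕ → M) (N : ℕ) :
    ∑ i ∈ range N, f (i + 1) = ∑ m ∈ Icc 1 N, f m := by
  rw [range_eq_Ico, sum_Ico_add', zero_add, Ico_add_one_right_eq_Icc]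

section Nilpotent

variable {R : Type*} [CommRing R] {x : R} {N : ℕ}

theorem Ring.inverse_one_sub_eq_sum_of_pow_eq_zero (hx : x ^ N = 0) :
    Ring.inverse (1 - x) = ∑ i ∈ range N, x ^ i := by
  have h : (1 - x) * ∑ i ∈ range N, x ^ i = 1 := by rw [mul_neg_geom_sum, hx, sub_zero]
  calc Ring.inverse (1 - x) = Ring.inverse (1 - x) * ((1 - x) * ∑ i ∈ range N, x ^ i) := by
        rw [h, mul_one]
    _ = ∑ i ∈ range N, x ^ i := by
        rw [← mul_assoc, Ring.inverse_mul_cancel _ (IsUnit.of_mul_eq_one _ h), one_mul]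

theorem mul_inverse_one_sub_of_pow_eq_zero (hx : x ^ N = 0) :
    x * Ring.inverse (1 - x) = ∑ m ∈ Icc 1 N, x ^ m := by
  rw [Ring.inverse_one_sub_eq_sum_of_pow_eq_zero hx, mul_sum, ← sum_range_succ_eq_sum_Icc_one]
  simp only [pow_succ']

end Nilpotent

theorem logOneSub_eq_sum_of_pow_eq_zero {A : Type*} [NormedCommRing A] [NormedAlgebra ℂ A]
    {u : A} {N : ℕ} (hu : u ^ N = 0) :
    logOneSub u = -∑ m ∈ Icc 1 N, (m : ℂ)⁻¹ • u ^ m := by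
  rw [logOneSub, tsum_eq_sum (s := range N), ← sum_range_succ_eq_sum_Icc_one]
  · push_cast; rfl
  · intro i hi
    rw [pow_eq_zero_of_le (by simp at hi; omega) hu, smul_zero]

theorem Nat.Coprime.mul_eq_mul_iff {a b m n : ℕ} (hab : a.Coprime b) (hb : 0 < b) :
    a * m = b * n ↔ ∃ s, m = b * s ∧ n = a * s := by
  constructor
  · intro h
    obtain ⟨s, rfl⟩ : b ∣ m := hab.symm.dvd_of_dvd_mul_left ⟨n, h⟩
    refine ⟨s, rfl, Nat.eq_of_mul_eq_mul_left hb ?_⟩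
    rw [← h]
    ring
  · rintro ⟨s, rfl, rfl⟩
    ring

theorem Nat.mul_eq_mul_iff_exists_div_gcd {a b m n : ℕ} (ha : 0 < a) (hb : 0 < b) :
    a * m = b * n ↔ ∃ s, m = b / a.gcd b * s ∧ n = a / a.gcd b * s := by
  have hg : 0 < a.gcd b := Nat.gcd_pos_of_pos_left b ha
  rw [← (Nat.coprime_div_gcd_div_gcd hg).mul_eq_mul_iff (Nat.div_gcd_pos_of_pos_right a hb)]
  conv_rhs => rw [← mul_right_inj' hg.ne', ← mul_assoc, ← mul_assoc,
    Nat.mul_div_cancel' (Nat.gcd_dvd_left a b), Nat.mul_div_cancel' (Nat.gcd_dvd_right a b)]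

section OppositeSigns

variable {j k : ℤ}

theorem mul_add_mul_ne_zero_of_mul_pos (hjk : 0 < j * k) {m n : ℕ} (hm : 0 < m) (hn : 0 < n) :
    j * m + k * n ≠ 0 := by
  have hm' : (0 : ℤ) < m := by exact_mod_cast hm
  have hn' : (0 : ℤ) < n := by exact_mod_cast hn
  rcases pos_and_pos_or_neg_and_neg_of_mul_pos hjk with ⟨hj, hk⟩ | ⟨hj, hk⟩
  · exact (add_pos (mul_pos hj hm') (mul_pos hk hn')).ne'
  · exact (add_neg (mul_neg_of_neg_of_pos hj hm') (mul_neg_of_neg_of_pos hk hn')).ne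

theorem eq_neg_sign_mul_natAbs_of_mul_neg (hjk : j * k < 0) :
    k = -j.sign * k.natAbs := by
  rw [Int.natCast_natAbs]
  rcases mul_neg_iff.1 hjk with ⟨hj, hk⟩ | ⟨hj, hk⟩
  · rw [Int.sign_eq_one_of_pos hj, abs_of_neg hk]
    ring
  · rw [Int.sign_eq_neg_one_of_neg hj, abs_of_pos hk]
    ring

theorem mul_add_mul_eq_zero_iff_of_mul_neg (hjk : j * k < 0) {m n : ℕ} :
    j * m + k * n = 0 ↔ ∃ s, m = k.natAbs / Nat.gcd j.natAbs k.natAbs * s ∧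
      n = j.natAbs / Nat.gcd j.natAbs k.natAbs * s := by
  rw [← Nat.mul_eq_mul_iff_exists_div_gcd (Int.natAbs_pos.2 (left_ne_zero_of_mul hjk.ne))
    (Int.natAbs_pos.2 (right_ne_zero_of_mul hjk.ne)), ← Int.natCast_inj]
  push_cast
  rcases mul_neg_iff.1 hjk with ⟨hj, hk⟩ | ⟨hj, hk⟩
  · rw [abs_of_pos hj, abs_of_neg hk]
    constructor <;> intro h <;> linarith
  · rw [abs_of_neg hj, abs_of_pos hk]
    constructor <;> intro h <;> linarith

theorem sum_filter_mul_add_mul_eq_zero_of_mul_neg {M : Type*} [AddCommMonoid M]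
    (hjk : j * k < 0) (N : ℕ) (f : ℕ → ℕ → M)
    (hf : ∀ m n, N < m ∨ N < n → f m n = 0) :
    ∑ p ∈ (Icc 1 N ×ˢ Icc 1 N).filter (fun p => j * p.1 + k * p.2 = 0), f p.1 p.2 =
      ∑ s ∈ Icc 1 N, f (k.natAbs / Nat.gcd j.natAbs k.natAbs * s)
        (j.natAbs / Nat.gcd j.natAbs k.natAbs * s) := by
  set K' := k.natAbs / Nat.gcd j.natAbs k.natAbs
  set J' := j.natAbs / Nat.gcd j.natAbs k.natAbs
  have hK' : 0 < K' :=
    Nat.div_gcd_pos_of_pos_right _ (Int.natAbs_pos.2 (right_ne_zero_of_mul hjk.ne))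
  have hJ' : 0 < J' :=
    Nat.div_gcd_pos_of_pos_left _ (Int.natAbs_pos.2 (left_ne_zero_of_mul hjk.ne))
  refine (sum_subset (s₂ := (Icc 1 N).image fun s => (K' * s, J' * s)) (fun p hp => ?_)
    fun p hp hpS => ?_).trans (sum_image fun s _ t _ h =>
      Nat.eq_of_mul_eq_mul_left hK' (congrArg Prod.fst h))
  · obtain ⟨hpN, hp0⟩ := mem_filter.1 hp
    obtain ⟨⟨hm1, hmN⟩, -⟩ := mem_product.1 hpN |>.imp mem_Icc.1 mem_Icc.1
    obtain ⟨s, hm, hn⟩ := (mul_add_mul_eq_zero_iff_of_mul_neg hjk).1 hp0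
    refine mem_image.2 ⟨s, mem_Icc.2 ⟨?_, ?_⟩, Prod.ext hm.symm hn.symm⟩
    · exact Nat.pos_of_ne_zero fun hs => by simp [hs] at hm; omega
    · exact (Nat.le_mul_of_pos_left s hK').trans (hm ▸ hmN)
  · obtain ⟨s, hs, rfl⟩ := mem_image.1 hp
    have hs1 := (mem_Icc.1 hs).1
    refine hf _ _ (by_contra fun h => hpS (mem_filter.2 ⟨?_, ?_⟩))
    · push Not at h
      exact mem_product.2
        ⟨mem_Icc.2 ⟨Nat.mul_pos hK' hs1, h.1⟩, mem_Icc.2 ⟨Nat.mul_pos hJ' hs1, h.2⟩⟩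
    · exact (mul_add_mul_eq_zero_iff_of_mul_neg hjk).2 ⟨s, rfl, rfl⟩

end OppositeSigns

section Circle

variable {ε : ℝ}

theorem hasDerivAt_circlePath (ε t : ℝ) :
    HasDerivAt (circlePath ε) (2 * π * I * circlePath ε t) t := by
  refine (((ofRealCLM.hasDerivAt (x := t)).const_mul (2 * π * I)).cexp.const_mul
    (ε : ℂ)).congr_deriv ?_
  simp only [circlePath, ofRealCLM_apply, ofReal_one, mul_one]
  ring

theorem continuous_circlePath (ε : ℝ) : Continuous (circlePath ε) :=
  continuous_iff_continuousAt.2 fun t => (hasDerivAt_circlePath ε t).continuousAt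

theorem circlePath_ne_zero (hε : ε ≠ 0) (t : ℝ) : circlePath ε t ≠ 0 :=
  mul_ne_zero (ofReal_ne_zero.2 hε) (exp_ne_zero _)

theorem circlePath_one (ε : ℝ) : circlePath ε 1 = circlePath ε 0 := by
  simp [circlePath]

theorem hasDerivAt_circlePath_zpow (hε : ε ≠ 0) (p : ℤ) (t : ℝ) :
    HasDerivAt (fun t => circlePath ε t ^ p) (p * (2 * π * I) * circlePath ε t ^ p) t := by
  have hγ := circlePath_ne_zero hε t
  refine ((hasDerivAt_zpow p _ (Or.inl hγ)).comp t (hasDerivAt_circlePath ε t)).congr_deriv ?_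
  rw [zpow_sub_one₀ hγ]
  field_simp

theorem continuous_circlePath_zpow (hε : ε ≠ 0) (p : ℤ) :
    Continuous fun t => circlePath ε t ^ p :=
  (continuous_circlePath ε).zpow₀ p fun t => Or.inl (circlePath_ne_zero hε t)

theorem continuous_circlePath_zpow_mul_zpow (hε : ε ≠ 0) (p q : ℤ) :
    Continuous fun t : Fin 2 → ℝ => circlePath ε (t 0) ^ p * circlePath ε (t 1) ^ q :=
  ((continuous_circlePath_zpow hε p).comp (continuous_apply 0)).mul
    ((continuous_circlePath_zpow hε q).comp (continuous_apply 1))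

theorem integral_circlePath_zpow (hε : ε ≠ 0) {p : ℤ} (hp : p ≠ 0) (y : ℝ) :
    ∫ x in (0 : ℝ)..y, circlePath ε x ^ p =
      (circlePath ε y ^ p - circlePath ε 0 ^ p) / (p * (2 * π * I)) := by
  have hc : (p : ℂ) * (2 * π * I) ≠ 0 := mul_ne_zero (Int.cast_ne_zero.2 hp) two_pi_I_ne_zero
  rw [sub_div, intervalIntegral.integral_eq_sub_of_hasDerivAt (fun x _ => ?_)
    ((continuous_circlePath_zpow hε p).intervalIntegrable _ _)]
  simpa [hc] using (hasDerivAt_circlePath_zpow hε p x).div_const (p * (2 * π * I))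

theorem integral_circlePath_zpow_zero_one (hε : ε ≠ 0) (p : ℤ) :
    ∫ x in (0 : ℝ)..1, circlePath ε x ^ p = if p = 0 then 1 else 0 := by
  split_ifs with hp
  · simp [hp]
  · rw [integral_circlePath_zpow hε hp, circlePath_one, sub_self, zero_div]

end Circle

theorem isCompact_orderedSimplex (k : ℕ) : IsCompact (orderedSimplex k) := by
  refine (isCompact_Icc (a := (0 : Fin k → ℝ)) (b := 1)).of_isClosed_subset ?_
    fun t ht => ⟨fun i => (ht.1 i).1, fun i => (ht.1 i).2⟩
  simp only [orderedSimplex, Set.ofPred_and, Set.ofPred_forall]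
  exact (isClosed_iInter fun i => isClosed_Icc.preimage (continuous_apply i)).inter
    (isClosed_iInter fun i => isClosed_iInter fun j => isClosed_iInter fun _ =>
      isClosed_le (continuous_apply i) (continuous_apply j))

theorem integral_orderedSimplex_two {E : Type*} [NormedAddCommGroup E] [NormedSpace ℝ E]
    (F : ℝ → ℝ → E)
    (hF : IntegrableOn (fun t : Fin 2 → ℝ => F (t 0) (t 1)) (orderedSimplex 2)) :
    ∫ t in orderedSimplex 2, F (t 0) (t 1) =
      ∫ y in (0 : ℝ)..1, ∫ x in (0 : ℝ)..y, F x y := by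
  set T : Set (ℝ × ℝ) := {z | z.2 ∈ Set.Icc 0 1 ∧ z.1 ∈ Set.Icc 0 z.2}
  have hT : orderedSimplex 2 = MeasurableEquiv.piFinTwo (fun _ => ℝ) ⁻¹' T := by
    ext t
    simp only [orderedSimplex, T, Set.mem_ofPred_eq, Set.mem_preimage,
      MeasurableEquiv.piFinTwo_apply, Set.mem_Icc, Fin.forall_fin_two]
    refine ⟨fun h => ⟨h.1.2, h.1.1.1, h.2.1.2 (by decide)⟩, fun h => ?_⟩
    exact ⟨⟨⟨h.2.1, h.2.2.trans h.1.2⟩, h.1⟩, ⟨fun _ => le_rfl, fun _ => h.2.2⟩,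
      fun h' => absurd h' (by decide), fun _ => le_rfl⟩
  have hTm : MeasurableSet T :=
    (measurableSet_Icc.preimage measurable_snd).inter
      ((measurableSet_le measurable_const measurable_fst).inter
        (measurableSet_le measurable_fst measurable_snd))
  have hmp := volume_preserving_piFinTwo fun _ : Fin 2 => ℝ
  have hemb := (MeasurableEquiv.piFinTwo fun _ : Fin 2 => ℝ).measurableEmbedding
  rw [hT] at hF ⊢
  have hFT : IntegrableOn (fun z : ℝ × ℝ => F z.1 z.2) T :=
    (hmp.integrableOn_comp_preimage hemb).1 hF
  refine (hmp.setIntegral_preimage_emb hemb (fun z => F z.1 z.2) T).trans ?_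
  rw [← integral_indicator hTm, Measure.volume_eq_prod, integral_prod_symm _
      (by rwa [← Measure.volume_eq_prod, integrable_indicator_iff hTm]),
    intervalIntegral.integral_of_le zero_le_one, ← integral_Icc_eq_integral_Ioc,
    ← integral_indicator measurableSet_Icc]
  congr 1
  ext y
  by_cases hy : y ∈ Set.Icc (0 : ℝ) 1
  · rw [Set.indicator_of_mem hy, intervalIntegral.integral_of_le hy.1,
      ← integral_Icc_eq_integral_Ioc, ← integral_indicator measurableSet_Icc]
    congr 1
    ext x
    simp only [Set.indicator_apply, T, Set.mem_ofPred_eq, hy, true_and]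
  · simp only [Set.indicator_of_notMem hy,
      Set.indicator_of_notMem (fun h : (_, y) ∈ T => hy h.1), integral_zero]

theorem integral_orderedSimplex_circlePath_zpow {ε : ℝ} (hε : ε ≠ 0) {p q : ℤ}
    (hp : p ≠ 0) (hq : q ≠ 0) :
    ∫ t in orderedSimplex 2, circlePath ε (t 0) ^ p * circlePath ε (t 1) ^ q =
      if p + q = 0 then ((p : ℂ) * (2 * π * I))⁻¹ else 0 := by
  set γ := circlePath ε
  have hcont (r : ℤ) : Continuous fun t => γ t ^ r := continuous_circlePath_zpow hε r
  rw [integral_orderedSimplex_two (fun x y => γ x ^ p * γ y ^ q)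
    ((continuous_circlePath_zpow_mul_zpow hε p q).continuousOn.integrableOn_compact
      (isCompact_orderedSimplex 2))]
  calc ∫ y in (0 : ℝ)..1, ∫ x in (0 : ℝ)..y, γ x ^ p * γ y ^ q
      = ∫ y in (0 : ℝ)..1,
          ((p : ℂ) * (2 * π * I))⁻¹ * (γ y ^ (p + q) - γ 0 ^ p * γ y ^ q) := by
        refine intervalIntegral.integral_congr fun y _ => ?_
        rw [intervalIntegral.integral_mul_const, integral_circlePath_zpow hε hp,
          zpow_add₀ (circlePath_ne_zero hε y)]
        ring
    _ = ((p : ℂ) * (2 * π * I))⁻¹ *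
          ((∫ y in (0 : ℝ)..1, γ y ^ (p + q)) -
            γ 0 ^ p * ∫ y in (0 : ℝ)..1, γ y ^ q) := by
        rw [intervalIntegral.integral_const_mul, intervalIntegral.integral_sub
          ((hcont _).intervalIntegrable _ _) (((hcont q).const_mul _).intervalIntegrable _ _),
          intervalIntegral.integral_const_mul]
    _ = _ := by
        rw [integral_circlePath_zpow_zero_one hε, integral_circlePath_zpow_zero_one hε, if_neg hq]
        split_ifs <;> simp

section LogDeriv

variable {A : Type*} [NormedCommRing A] [NormedAlgebra ℂ A] {a b : A} {N : ℕ} {ε : ℝ}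
  {j k : ℤ}

/-- The form `d(1 - a x^j)/(1 - a x^j)` pulled back along `circlePath ε`. -/
noncomputable def circleLogDeriv (a : A) (j : ℤ) (ε t : ℝ) : A :=
  -a * algebraMap ℂ A ((j : ℂ) * circlePath ε t ^ (j - 1) * deriv (circlePath ε) t) *
    Ring.inverse (1 - a * algebraMap ℂ A (circlePath ε t ^ j))

theorem circleLogDeriv_eq_sum (hε : ε ≠ 0) (ha : a ^ N = 0) (t : ℝ) :
    circleLogDeriv a j ε t =
      ∑ m ∈ Icc 1 N, (-(j * (2 * π * I)) * circlePath ε t ^ (j * m)) • a ^ m := by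
  have hγ := circlePath_ne_zero hε t
  have hx : (circlePath ε t ^ j • a) ^ N = 0 := by rw [smul_pow, ha, smul_zero]
  have hderiv : (j : ℂ) * circlePath ε t ^ (j - 1) * deriv (circlePath ε) t =
      j * (2 * π * I) * circlePath ε t ^ j := by
    rw [(hasDerivAt_circlePath ε t).deriv, zpow_sub_one₀ hγ]
    field_simp
  calc circleLogDeriv a j ε t = -(j * (2 * π * I)) •
        (circlePath ε t ^ j • a * Ring.inverse (1 - circlePath ε t ^ j • a)) := by
        rw [circleLogDeriv, hderiv, Algebra.smul_def, Algebra.smul_def,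
          mul_comm (algebraMap ℂ A _) a]
        simp only [map_mul, map_neg]
        ring
    _ = _ := by
        rw [mul_inverse_one_sub_of_pow_eq_zero hx, smul_sum]
        refine sum_congr rfl fun m _ => ?_
        rw [smul_pow, smul_smul, ← zpow_natCast, ← zpow_mul]

theorem integral_circleLogDeriv_mul_circleLogDeriv [CompleteSpace A] (hε : ε ≠ 0)
    (ha : a ^ N = 0) (hb : b ^ N = 0) (hj : j ≠ 0) (hk : k ≠ 0) :
    ∫ t in orderedSimplex 2, circleLogDeriv a j ε (t 0) * circleLogDeriv b k ε (t 1) =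
      ∑ p ∈ (Icc 1 N ×ˢ Icc 1 N).filter (fun p => j * p.1 + k * p.2 = 0),
        (k * (2 * π * I) / p.1) • (a ^ p.1 * b ^ p.2) := by
  have hexp (t : Fin 2 → ℝ) : circleLogDeriv a j ε (t 0) * circleLogDeriv b k ε (t 1) =
      ∑ p ∈ Icc 1 N ×ˢ Icc 1 N, (j * k * (2 * π * I) ^ 2 *
        (circlePath ε (t 0) ^ (j * p.1) * circlePath ε (t 1) ^ (k * p.2))) •
          (a ^ p.1 * b ^ p.2) := by
    rw [circleLogDeriv_eq_sum hε ha, circleLogDeriv_eq_sum hε hb, sum_mul_sum, sum_product]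
    refine sum_congr rfl fun m _ => sum_congr rfl fun n _ => ?_
    rw [smul_mul_smul_comm]
    ring_nf
  simp_rw [hexp]
  rw [integral_finsetSum _ fun p _ => ?integrable, sum_filter]
  case integrable =>
    exact ((continuous_const.mul (continuous_circlePath_zpow_mul_zpow hε _ _)).smul
      continuous_const).continuousOn.integrableOn_compact (isCompact_orderedSimplex 2)
  refine sum_congr rfl fun p hp => ?_
  obtain ⟨⟨hm, -⟩, hn, -⟩ := mem_product.1 hp |>.imp mem_Icc.1 mem_Icc.1
  have hm0 : (p.1 : ℂ) ≠ 0 := by exact_mod_cast (by omega : p.1 ≠ 0)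
  rw [integral_smul_const, integral_const_mul, integral_orderedSimplex_circlePath_zpow hε
    (mul_ne_zero hj (by omega)) (mul_ne_zero hk (by omega))]
  split_ifs
  · congr 1
    push_cast
    field_simp [two_pi_I_ne_zero]
  · simp

theorem integral_circleLogDeriv_mul_circleLogDeriv_of_mul_pos [CompleteSpace A] (hε : ε ≠ 0)
    (ha : a ^ N = 0) (hb : b ^ N = 0) (hjk : 0 < j * k) :
    ∫ t in orderedSimplex 2, circleLogDeriv a j ε (t 0) * circleLogDeriv b k ε (t 1) = 0 := by
  rw [integral_circleLogDeriv_mul_circleLogDeriv hε ha hb (left_ne_zero_of_mul hjk.ne')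
    (right_ne_zero_of_mul hjk.ne'), filter_false_of_mem, sum_empty]
  intro p hp
  obtain ⟨⟨hm, -⟩, hn, -⟩ := mem_product.1 hp |>.imp mem_Icc.1 mem_Icc.1
  exact mul_add_mul_ne_zero_of_mul_pos hjk hm hn

theorem integral_circleLogDeriv_mul_circleLogDeriv_of_mul_neg [CompleteSpace A] (hε : ε ≠ 0)
    (ha : a ^ N = 0) (hb : b ^ N = 0) (hjk : j * k < 0) :
    ∫ t in orderedSimplex 2, circleLogDeriv a j ε (t 0) * circleLogDeriv b k ε (t 1) =
      algebraMap ℂ A (2 * π * I * j.sign * Nat.gcd j.natAbs k.natAbs) *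
        logOneSub (a ^ (k.natAbs / Nat.gcd j.natAbs k.natAbs) *
          b ^ (j.natAbs / Nat.gcd j.natAbs k.natAbs)) := by
  set g := Nat.gcd j.natAbs k.natAbs
  set K' := k.natAbs / g
  set J' := j.natAbs / g
  have hK' : 0 < K' :=
    Nat.div_gcd_pos_of_pos_right _ (Int.natAbs_pos.2 (right_ne_zero_of_mul hjk.ne))
  have hk : (k : ℂ) = -j.sign * (g * K') := by
    have hgK : g * K' = k.natAbs := Nat.mul_div_cancel' (Nat.gcd_dvd_right _ _)
    have h := eq_neg_sign_mul_natAbs_of_mul_neg hjk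
    rw [← hgK] at h
    exact_mod_cast h
  have hu : (a ^ K' * b ^ J') ^ N = 0 := by
    rw [mul_pow, ← pow_mul, pow_eq_zero_of_le (Nat.le_mul_of_pos_left N hK') ha, zero_mul]
  rw [integral_circleLogDeriv_mul_circleLogDeriv hε ha hb (left_ne_zero_of_mul hjk.ne)
      (right_ne_zero_of_mul hjk.ne),
    sum_filter_mul_add_mul_eq_zero_of_mul_neg hjk N
      (fun m n => (k * (2 * π * I) / m) • (a ^ m * b ^ n))
      (by rintro m n (h | h) <;> simp [pow_eq_zero_of_le h.le, ha, hb]),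
    logOneSub_eq_sum_of_pow_eq_zero hu, mul_neg, mul_sum, ← sum_neg_distrib]
  refine sum_congr rfl fun s hs => ?_
  have hs0 : (s : ℂ) ≠ 0 := by exact_mod_cast (by have := (mem_Icc.1 hs).1; omega : s ≠ 0)
  rw [← Algebra.smul_def, smul_smul, ← neg_smul, mul_pow, ← pow_mul, ← pow_mul]
  congr 1
  change (k : ℂ) * _ / ((K' * s : ℕ) : ℂ) = _
  have hK0 : (K' : ℂ) ≠ 0 := by exact_mod_cast hK'.ne'
  rw [Nat.cast_mul, hk]
  field_simp

end LogDeriv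

theorem iteratedIntegral_logDeriv_logDeriv_general
    (A : Type*) [NormedCommRing A] [NormedAlgebra ℂ A] [FiniteDimensional ℂ A]
    [IsLocalRing A]
    (a b : A) (ha : a ∈ IsLocalRing.maximalIdeal A) (hb : b ∈ IsLocalRing.maximalIdeal A)
    (j k : ℤ) (ε : ℝ) (hε : 0 < ε)
    (I : A)
    (hI : I = ∫ t in orderedSimplex 2,
        (-a * algebraMap ℂ A ((j : ℂ) * circlePath ε (t 0) ^ (j - 1) *
              deriv (circlePath ε) (t 0)) *
            Ring.inverse (1 - a * algebraMap ℂ A (circlePath ε (t 0) ^ j))) *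
        (-b * algebraMap ℂ A ((k : ℂ) * circlePath ε (t 1) ^ (k - 1) *
              deriv (circlePath ε) (t 1)) *
            Ring.inverse (1 - b * algebraMap ℂ A (circlePath ε (t 1) ^ k)))) :
    (0 < j * k → I = 0) ∧
      (j * k < 0 →
        I = algebraMap ℂ A (2 * Real.pi * Complex.I * (j.sign : ℂ) * (Nat.gcd j.natAbs k.natAbs : ℂ)) *
          logOneSub (a ^ (k.natAbs / Nat.gcd j.natAbs k.natAbs) *
            b ^ (j.natAbs / Nat.gcd j.natAbs k.natAbs))) := by
  have : IsArtinianRing A := .of_finite ℂ A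
  have : CompleteSpace A := FiniteDimensional.complete ℂ A
  obtain ⟨Na, hNa⟩ := Ring.KrullDimLE.isNilpotent_iff_mem_maximalIdeal.2 ha
  obtain ⟨Nb, hNb⟩ := Ring.KrullDimLE.isNilpotent_iff_mem_maximalIdeal.2 hb
  have ha' : a ^ max Na Nb = 0 := pow_eq_zero_of_le (le_max_left _ _) hNa
  have hb' : b ^ max Na Nb = 0 := pow_eq_zero_of_le (le_max_right _ _) hNb
  exact ⟨fun hjk => hI.trans
      (integral_circleLogDeriv_mul_circleLogDeriv_of_mul_pos hε.ne' ha' hb' hjk),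
    fun hjk => hI.trans
      (integral_circleLogDeriv_mul_circleLogDeriv_of_mul_neg hε.ne' ha' hb' hjk)⟩

/-- Let `A` be a finite-dimensional commutative local `ℂ`-algebra (normed `ℂ`-algebra)
with residue field `ℂ`, `a, b` in the maximal ideal (hence nilpotent), `j, k` nonzero
integers and `γ (t) = ε e^{2πit}`.  The iterated integral `I` of `d(1 - a x^j)/(1 - a x^j)`
followed by `d(1 - b x^k)/(1 - b x^k)` along `γ` equals `0` when `j k > 0`, and equals
`2πi sgn(j) d log (1 - a^{|k|/d} b^{|j|/d})` with `d = gcd (|j|, |k|)` when `j k < 0`. -/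
theorem iteratedIntegral_logDeriv_logDeriv
    (A : Type*) [NormedCommRing A] [NormedAlgebra ℂ A] [FiniteDimensional ℂ A]
    [IsLocalRing A]
    (hres : Function.Bijective ((IsLocalRing.residue A).comp (algebraMap ℂ A)))
    (a b : A) (ha : a ∈ IsLocalRing.maximalIdeal A) (hb : b ∈ IsLocalRing.maximalIdeal A)
    (j k : ℤ) (hj : j ≠ 0) (hk : k ≠ 0) (ε : ℝ) (hε : 0 < ε)
    (I : A)
    (hI : I = ∫ t in orderedSimplex 2,
        (-a * algebraMap ℂ A ((j : ℂ) * circlePath ε (t 0) ^ (j - 1) *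
              deriv (circlePath ε) (t 0)) *
            Ring.inverse (1 - a * algebraMap ℂ A (circlePath ε (t 0) ^ j))) *
        (-b * algebraMap ℂ A ((k : ℂ) * circlePath ε (t 1) ^ (k - 1) *
              deriv (circlePath ε) (t 1)) *
            Ring.inverse (1 - b * algebraMap ℂ A (circlePath ε (t 1) ^ k)))) :
    (0 < j * k → I = 0) ∧
      (j * k < 0 →
        I = algebraMap ℂ A (2 * Real.pi * Complex.I * (j.sign : ℂ) * (Nat.gcd j.natAbs k.natAbs : ℂ)) *
          logOneSub (a ^ (k.natAbs / Nat.gcd j.natAbs k.natAbs) *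
            b ^ (j.natAbs / Nat.gcd j.natAbs k.natAbs))) :=
  iteratedIntegral_logDeriv_logDeriv_general A a b ha hb j k ε hε I hI
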